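/- arXiv:2505.07383 — 3 statements merged into one kernel-verified Lean document; each statement's English description precedes it below -/
import Mathlib

section
/- The function f(y) = Φ(y/3 + (2/3)√(y²+6 ln 2)) - Φ((2/3)y + (1/3)√(y²+6 ln 2)) is strictly decreasing on (-∞, 0), where Φ is the standard normal CDF. -/
/-!
Write `s = √(y² + 6 ln 2)`, `a = (2y + s)/3` and `a + b = (y + 2s)/3`, so that
`f(y) = Φ(a + b) - Φ(a)`. Since `(a + b)² - a² = (s² - y²)/3 = 2 ln 2`, the density satisfies
`φ(a + b) = φ(a)/2`, and the chain rule gives `f'(y) = φ(a)/2 · (a + b)' - φ(a) · a' = -φ(a)/2 < 0`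
for every real `y`.
-/

open MeasureTheory ProbabilityTheory

/-- The standard normal cumulative distribution function. -/
noncomputable def Phi (x : ℝ) : ℝ := ((gaussianReal 0 1) (Set.Iic x)).toReal

open Real

lemma continuous_gaussianPDFReal (μ : ℝ) (v : NNReal) : Continuous (gaussianPDFReal μ v) := by
  unfold gaussianPDFReal
  fun_prop

theorem hasDerivAt_gaussianReal_Iic (μ : ℝ) {v : NNReal} (hv : v ≠ 0) (x : ℝ) :
    HasDerivAt (fun x => (gaussianReal μ v (Set.Iic x)).toReal) (gaussianPDFReal μ v x) x := by
  have hint := integrable_gaussianPDFReal μ v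
  have hcdf : (fun x => (gaussianReal μ v (Set.Iic x)).toReal) =
      fun x => (∫ t in (0 : ℝ)..x, gaussianPDFReal μ v t) +
        (gaussianReal μ v (Set.Iic 0)).toReal := by
    funext y
    simp only [gaussianReal_apply_eq_integral μ hv,
      ENNReal.toReal_ofReal (integral_nonneg fun _ => gaussianPDFReal_nonneg μ v _)]
    rw [← intervalIntegral.integral_Iic_sub_Iic hint.integrableOn hint.integrableOn]
    ring
  rw [hcdf]
  have hcont := continuous_gaussianPDFReal μ v
  exact (intervalIntegral.integral_hasDerivAt_right hint.intervalIntegrable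
    hcont.aestronglyMeasurable.stronglyMeasurableAtFilter hcont.continuousAt).add_const _

lemma hasDerivAt_Phi (x : ℝ) : HasDerivAt Phi (gaussianPDFReal 0 1 x) x :=
  hasDerivAt_gaussianReal_Iic 0 one_ne_zero x

lemma gaussianPDFReal_eq_mul_exp (μ : ℝ) (v : NNReal) (x y : ℝ) :
    gaussianPDFReal μ v x =
      gaussianPDFReal μ v y * exp (-((x - μ) ^ 2 - (y - μ) ^ 2) / (2 * v)) := by
  simp only [gaussianPDFReal_def, mul_assoc, ← exp_add]
  ring_nf

lemma hasDerivAt_sqrt_sq_add {c : ℝ} (hc : 0 < c) (y : ℝ) :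
    HasDerivAt (fun y => √(y ^ 2 + c)) (y / √(y ^ 2 + c)) y := by
  convert ((hasDerivAt_pow 2 y).add_const c).sqrt (by positivity) using 1
  field_simp
  ring

-- The paper's `a` and `a + b`.
noncomputable def lowerArg (y : ℝ) : ℝ := (2 / 3) * y + (1 / 3) * √(y ^ 2 + 6 * log 2)

noncomputable def upperArg (y : ℝ) : ℝ := y / 3 + (2 / 3) * √(y ^ 2 + 6 * log 2)

lemma upperArg_sq_sub_lowerArg_sq (y : ℝ) : upperArg y ^ 2 - lowerArg y ^ 2 = 2 * log 2 := by
  have hs : √(y ^ 2 + 6 * log 2) ^ 2 = y ^ 2 + 6 * log 2 := sq_sqrt (by positivity)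
  unfold upperArg lowerArg
  linear_combination (1 / 3 : ℝ) * hs

lemma gaussianPDFReal_upperArg (y : ℝ) :
    gaussianPDFReal 0 1 (upperArg y) = gaussianPDFReal 0 1 (lowerArg y) / 2 := by
  rw [gaussianPDFReal_eq_mul_exp 0 1 _ (lowerArg y)]
  simp only [sub_zero, upperArg_sq_sub_lowerArg_sq, NNReal.coe_one]
  rw [show -(2 * log 2) / (2 * 1) = -log 2 by ring, exp_neg, exp_log two_pos]
  ring

lemma hasDerivAt_Phi_upperArg_sub_Phi_lowerArg (y : ℝ) :
    HasDerivAt (fun y => Phi (upperArg y) - Phi (lowerArg y))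
      (-gaussianPDFReal 0 1 (lowerArg y) / 2) y := by
  have hs := hasDerivAt_sqrt_sq_add (by positivity : (0 : ℝ) < 6 * log 2) y
  have hupper : HasDerivAt upperArg (1 / 3 + 2 / 3 * (y / √(y ^ 2 + 6 * log 2))) y :=
    ((hasDerivAt_id y).div_const 3).add (hs.const_mul (2 / 3))
  have hlower : HasDerivAt lowerArg (2 / 3 * 1 + 1 / 3 * (y / √(y ^ 2 + 6 * log 2))) y :=
    ((hasDerivAt_id y).const_mul (2 / 3)).add (hs.const_mul (1 / 3))
  refine (((hasDerivAt_Phi _).comp y hupper).sub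
    ((hasDerivAt_Phi _).comp y hlower)).congr_deriv ?_
  rw [gaussianPDFReal_upperArg]
  ring

/-- The function
`f(y) = Φ(y/3 + (2/3)√(y²+6 ln 2)) - Φ((2/3)y + (1/3)√(y²+6 ln 2))`
is strictly decreasing on `(-∞, 0)`. -/
theorem f_strictAntiOn :
    StrictAntiOn
      (fun y : ℝ =>
        Phi (y / 3 + (2 / 3) * Real.sqrt (y ^ 2 + 6 * Real.log 2)) -
          Phi ((2 / 3) * y + (1 / 3) * Real.sqrt (y ^ 2 + 6 * Real.log 2)))
      (Set.Iio (0 : ℝ)) := by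
  have hanti : StrictAnti fun y => Phi (upperArg y) - Phi (lowerArg y) := by
    refine strictAnti_of_deriv_neg fun y => ?_
    rw [(hasDerivAt_Phi_upperArg_sub_Phi_lowerArg y).deriv]
    linarith [gaussianPDFReal_pos 0 1 (lowerArg y) one_ne_zero]
  exact hanti.strictAntiOn _
end

section
/- Under the standard p-variate normal distribution P₀ = N(0, I_p), the maximizer of the scatter depth D(Γ, P₀) over symmetric positive definite matrices Γ is the matrix [Φ⁻¹(3/4)]² · I_p, and the corresponding maximal depth value is 1/2. -/
open MeasureTheory ProbabilityTheory Matrix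

/-- The standard multivariate normal distribution `N(0, I_p)` on `ℝᵖ`. -/
noncomputable def stdGaussianPi (p : ℕ) : Measure (Fin p → ℝ) :=
  Measure.pi fun _ => gaussianReal 0 1

/-- The scatter halfspace depth of a matrix `Γ` at a distribution `P` on `ℝᵖ`:
`D(Γ,P) = inf over unit vectors u of min{P(|uᵀX|² ≤ uᵀΓu), P(|uᵀX|² ≥ uᵀΓu)}`. -/
noncomputable def scatterDepth {p : ℕ} (Γ : Matrix (Fin p) (Fin p) ℝ)
    (P : Measure (Fin p → ℝ)) : ℝ :=
  ⨅ u : {u : Fin p → ℝ // u ⬝ᵥ u = 1},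
    min (P {x | (u.1 ⬝ᵥ x) ^ 2 ≤ u.1 ⬝ᵥ Γ.mulVec u.1}).toReal
        (P {x | u.1 ⬝ᵥ Γ.mulVec u.1 ≤ (u.1 ⬝ᵥ x) ^ 2}).toReal

/-- The inverse of the standard normal CDF. -/
noncomputable def PhiInv : ℝ → ℝ := Function.invFun Phi

/-!
The projection `uᵀX` of a standard normal vector onto a unit vector `u` is standard normal, so
every term of the infimum defining the depth is the same function of `c = uᵀΓu`:
`min (P(Z² ≤ c), P(c ≤ Z²))` with `Z ~ N(0,1)`. Since `Z` has no atoms the two probabilities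
add up to `1`, so each term is at most `1/2`, with equality when `P(Z² ≤ c) = 2Φ(√c) - 1 = 1/2`,
i.e. `c = Φ⁻¹(3/4)²`.
-/

open Set Filter
open scoped RealInnerProductSpace

instance nullSingletonClass_stdGaussianReal : NullSingletonClass (gaussianReal 0 1) :=
  nullSingletonClass_gaussianReal one_ne_zero

theorem measureReal_sq_le_add_measureReal_le_sq (ν : Measure ℝ) [IsProbabilityMeasure ν]
    [NullSingletonClass ν] (c : ℝ) :
    ν.real {t | t ^ 2 ≤ c} + ν.real {t | c ≤ t ^ 2} = 1 := by
  have hfinite : ({t | t ^ 2 ≤ c} ∩ {t | c ≤ t ^ 2}).Finite := by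
    refine (Set.toFinite {√c, -√c}).subset fun t ht ↦ ?_
    have hsq : t ^ 2 = c := le_antisymm ht.1 ht.2
    have : |t| = √c := by rw [← Real.sqrt_sq_eq_abs, hsq]
    rcases abs_eq (Real.sqrt_nonneg c) |>.1 this with h | h <;> simp [h]
  have hunion : {t : ℝ | t ^ 2 ≤ c} ∪ {t | c ≤ t ^ 2} = univ := by
    ext t; simp [le_total]
  have := measureReal_union_add_inter (μ := ν) (s := {t : ℝ | t ^ 2 ≤ c})
    (measurableSet_le measurable_const (by fun_prop) : MeasurableSet {t : ℝ | c ≤ t ^ 2})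
  rwa [hunion, probReal_univ, (measureReal_eq_zero_iff).2 (hfinite.measure_zero ν),
    add_zero, eq_comm] at this

theorem Phi_eq_measureReal (x : ℝ) : Phi x = (gaussianReal 0 1).real (Iic x) := rfl

theorem Phi_neg (x : ℝ) : Phi (-x) = 1 - Phi x := by
  have hsymm : (gaussianReal 0 1).real (Iic (-x)) = (gaussianReal 0 1).real (Ici x) := by
    have hmap : (gaussianReal 0 1).map (-·) = gaussianReal 0 1 := by
      simpa using gaussianReal_map_neg (μ := 0) (v := 1)
    nth_rw 1 [← hmap]
    rw [map_measureReal_apply measurable_neg measurableSet_Iic, neg_preimage, neg_Iic, neg_neg]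
  rw [Phi_eq_measureReal, Phi_eq_measureReal, hsymm, ← measureReal_congr Ioi_ae_eq_Ici,
    ← compl_Iic, probReal_compl_eq_one_sub measurableSet_Iic]

theorem Phi_zero : Phi 0 = 1 / 2 := by
  linarith [neg_zero (G := ℝ) ▸ Phi_neg 0]

theorem Phi_eq_cdf : Phi = cdf (gaussianReal 0 1) := funext fun x ↦ (cdf_eq_real _ x).symm

theorem monotone_Phi : Monotone Phi := Phi_eq_cdf ▸ monotone_cdf _

theorem continuous_Phi : Continuous Phi := by
  have h : Phi = fun x ↦ ∫ _ in Iic x, (1 : ℝ) ∂gaussianReal 0 1 := by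
    ext x; simp [Phi_eq_measureReal]
  refine continuous_iff_continuousAt.2 fun x ↦ ?_
  rw [h]
  exact (IntegrableOn.continuousOn_Iic_primitive_Iic (integrable_const _).integrableOn).continuousAt
    (Iic_mem_nhds (lt_add_one x))

theorem Phi_PhiInv {a : ℝ} (h₀ : 0 < a) (h₁ : a < 1) : Phi (PhiInv a) = a := by
  refine Function.invFun_eq (mem_range_of_exists_le_of_exists_ge continuous_Phi ?_ ?_)
  · exact ((Phi_eq_cdf ▸ tendsto_cdf_atBot _).eventually (eventually_le_nhds h₀)).exists
  · exact ((Phi_eq_cdf ▸ tendsto_cdf_atTop _).eventually (eventually_ge_nhds h₁)).exists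

theorem PhiInv_pos {a : ℝ} (h₀ : 1 / 2 < a) (h₁ : a < 1) : 0 < PhiInv a := by
  by_contra! h
  have := Phi_PhiInv (by linarith) h₁ ▸ Phi_zero ▸ monotone_Phi h
  linarith

theorem gaussianReal_real_Icc {a b : ℝ} (h : a ≤ b) :
    (gaussianReal 0 1).real (Icc a b) = Phi b - Phi a := by
  rw [← measureReal_congr Ioc_ae_eq_Icc, ← Iic_sdiff_Iic,
    measureReal_sdiff (Iic_subset_Iic.2 h) measurableSet_Iic, Phi_eq_measureReal,
    Phi_eq_measureReal]

theorem gaussianReal_real_sq_le_sq (m : ℝ) :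
    (gaussianReal 0 1).real {t | t ^ 2 ≤ m ^ 2} = 2 * Phi |m| - 1 := by
  have hset : {t : ℝ | t ^ 2 ≤ m ^ 2} = Icc (-|m|) |m| := by
    ext t; simp only [mem_ofPred_eq, mem_Icc, sq_le_sq, abs_le]
  rw [hset, gaussianReal_real_Icc (neg_le_self (abs_nonneg m)), Phi_neg]
  ring

theorem stdGaussian_map_inner {E : Type*} [NormedAddCommGroup E] [InnerProductSpace ℝ E]
    [FiniteDimensional ℝ E] [MeasurableSpace E] [BorelSpace E] {v : E} (hv : ‖v‖ = 1) :
    (stdGaussian E).map (fun x ↦ ⟪v, x⟫) = gaussianReal 0 1 := by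
  have h := IsGaussian.map_eq_gaussianReal (μ := stdGaussian E) (innerSL ℝ v)
  rw [integral_strongDual_stdGaussian, variance_dual_stdGaussian, innerSL_apply_norm, hv] at h
  simpa using h

theorem stdGaussianPi_map_dotProduct {p : ℕ} {u : Fin p → ℝ} (hu : u ⬝ᵥ u = 1) :
    (stdGaussianPi p).map (u ⬝ᵥ ·) = gaussianReal 0 1 := by
  have hinner (x : Fin p → ℝ) : ⟪WithLp.toLp 2 u, WithLp.toLp 2 x⟫ = u ⬝ᵥ x := by
    rw [EuclideanSpace.inner_toLp_toLp, star_trivial, dotProduct_comm]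
  have hnorm : ‖WithLp.toLp 2 u‖ = 1 := by
    rw [norm_eq_sqrt_real_inner, hinner, hu, Real.sqrt_one]
  have hcomp : (u ⬝ᵥ ·) = (fun y ↦ ⟪WithLp.toLp 2 u, y⟫) ∘ WithLp.toLp 2 := by
    ext x; exact (hinner x).symm
  rw [stdGaussianPi, hcomp, ← Measure.map_map (by fun_prop) (by fun_prop), map_pi_eq_stdGaussian,
    stdGaussian_map_inner hnorm]

theorem scatterDepth_eq_of_map_dotProduct {p : ℕ} (Γ : Matrix (Fin p) (Fin p) ℝ)
    {P : Measure (Fin p → ℝ)} {ν : Measure ℝ}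
    (hP : ∀ u : Fin p → ℝ, u ⬝ᵥ u = 1 → P.map (u ⬝ᵥ ·) = ν) :
    scatterDepth Γ P = ⨅ u : {u : Fin p → ℝ // u ⬝ᵥ u = 1},
      min (ν.real {t | t ^ 2 ≤ u.1 ⬝ᵥ Γ *ᵥ u.1})
        (ν.real {t | u.1 ⬝ᵥ Γ *ᵥ u.1 ≤ t ^ 2}) := by
  refine iInf_congr fun u ↦ ?_
  have hmeas : Measurable (u.1 ⬝ᵥ ·) := by fun_prop
  rw [← hP u.1 u.2, map_measureReal_apply hmeas (measurableSet_le (by fun_prop) (by fun_prop)),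
    map_measureReal_apply hmeas (measurableSet_le (by fun_prop) (by fun_prop))]
  rfl

/-- Under the standard `p`-variate normal distribution, the deepest scatter matrix is
`[Φ⁻¹(3/4)]² · I_p`, with maximal depth value `1/2`. -/
theorem deepest_scatter_gaussian (p : ℕ) (hp : 0 < p) :
    scatterDepth ((PhiInv (3 / 4)) ^ 2 • (1 : Matrix (Fin p) (Fin p) ℝ))
        (stdGaussianPi p) = 1 / 2 ∧
      ∀ Γ : Matrix (Fin p) (Fin p) ℝ, Γ.PosDef →
        scatterDepth Γ (stdGaussianPi p) ≤ 1 / 2 := by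
  set m := PhiInv (3 / 4)
  have hm : 0 < m := PhiInv_pos (by norm_num) (by norm_num)
  have hle : (gaussianReal 0 1).real {t | t ^ 2 ≤ m ^ 2} = 1 / 2 := by
    rw [gaussianReal_real_sq_le_sq, abs_of_pos hm, Phi_PhiInv (by norm_num) (by norm_num)]
    norm_num
  have hge : (gaussianReal 0 1).real {t | m ^ 2 ≤ t ^ 2} = 1 / 2 := by
    linarith [measureReal_sq_le_add_measureReal_le_sq (gaussianReal 0 1) (m ^ 2)]
  let e : {u : Fin p → ℝ // u ⬝ᵥ u = 1} := ⟨Pi.single ⟨0, hp⟩ 1, by simp⟩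
  constructor
  · rw [scatterDepth_eq_of_map_dotProduct _ fun u ↦ stdGaussianPi_map_dotProduct]
    have hquad (u : {u : Fin p → ℝ // u ⬝ᵥ u = 1}) :
        u.1 ⬝ᵥ (m ^ 2 • 1 : Matrix (Fin p) (Fin p) ℝ) *ᵥ u.1 = m ^ 2 := by
      rw [smul_mulVec, one_mulVec, dotProduct_smul, u.2, smul_eq_mul, mul_one]
    simp_rw [hquad, hle, hge, min_self]
    have : Nonempty {u : Fin p → ℝ // u ⬝ᵥ u = 1} := ⟨e⟩
    exact ciInf_const
  · intro Γ _
    rw [scatterDepth_eq_of_map_dotProduct _ fun u ↦ stdGaussianPi_map_dotProduct]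
    refine (ciInf_le ⟨0, ?_⟩ e).trans ?_
    · rintro _ ⟨u, rfl⟩
      exact le_min measureReal_nonneg measureReal_nonneg
    · have hsum :=
        measureReal_sq_le_add_measureReal_le_sq (gaussianReal 0 1) (e.1 ⬝ᵥ Γ *ᵥ e.1)
      refine min_le_iff.2 ?_
      by_contra! h
      linarith [h.1, h.2]
end

section
/- Let ε < 1/3, P₀ a distribution with maximal scatter depth D_M(P₀), and P_{ε,Q} = (1-ε)P₀ + εQ. Define Λ(ε,P₀) = inf_Q D_M(P_{ε,Q}) and δ(ε,P₀) = [Λ(ε,P₀) - (1-ε)D_M(P₀)]/(1-ε) ≥ 0. If Γ ∉ L(α, P₀) with α = ε/(1-ε) - δ(ε,P₀), where L(α,P₀) = {Γ ≻ 0 : D(Γ,P₀) ≥ D_M(P₀) - α}, then D(Γ, P_{ε,Q}) < Λ(ε,P₀), so Γ cannot be a deepest scatter matrix under P_{ε,Q}. -/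
/-!
Every halfspace probability under `P_{ε,Q} = (1-ε)P₀ + εQ` lies between `(1-ε)` times its
`P₀`-value and that plus `ε`, hence `(1-ε)D(Γ,P₀) ≤ D(Γ,P_{ε,Q}) ≤ (1-ε)D(Γ,P₀) + ε`.
The lower bound gives `Λ ≥ (1-ε)D_M(P₀)`, i.e. `δ ≥ 0`; `α` is exactly the value with
`(1-ε)(D_M(P₀) - α) + ε = Λ`, so the upper bound turns `D(Γ,P₀) < D_M(P₀) - α` into
`D(Γ,P_{ε,Q}) < Λ`.
-/

open MeasureTheory ProbabilityTheory Matrix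

/-- The `ε`-contaminated mixture `(1-ε)·P₀ + ε·Q`. -/
noncomputable def contam {p : ℕ} (ε : ℝ) (P₀ Q : Measure (Fin p → ℝ)) :
    Measure (Fin p → ℝ) :=
  ENNReal.ofReal (1 - ε) • P₀ + ENNReal.ofReal ε • Q

/-- The maximal scatter depth `D_M(P) = sup_Γ D(Γ, P)` over positive definite matrices. -/
noncomputable def maxDepth {p : ℕ} (P : Measure (Fin p → ℝ)) : ℝ :=
  ⨆ Γ : {Γ : Matrix (Fin p) (Fin p) ℝ // Γ.PosDef}, scatterDepth Γ.1 P

noncomputable def directionalDepth {p : ℕ} (Γ : Matrix (Fin p) (Fin p) ℝ)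
    (P : Measure (Fin p → ℝ)) (u : {u : Fin p → ℝ // u ⬝ᵥ u = 1}) : ℝ :=
  min (P {x | (u.1 ⬝ᵥ x) ^ 2 ≤ u.1 ⬝ᵥ Γ.mulVec u.1}).toReal
    (P {x | u.1 ⬝ᵥ Γ.mulVec u.1 ≤ (u.1 ⬝ᵥ x) ^ 2}).toReal

section Contamination

variable {p : ℕ} {ε : ℝ} (P₀ Q : Measure (Fin p → ℝ))

theorem scatterDepth_eq_iInf_directionalDepth (Γ : Matrix (Fin p) (Fin p) ℝ)
    (P : Measure (Fin p → ℝ)) : scatterDepth Γ P = ⨅ u, directionalDepth Γ P u :=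
  rfl

theorem directionalDepth_nonneg (Γ : Matrix (Fin p) (Fin p) ℝ) (P : Measure (Fin p → ℝ))
    (u : {u : Fin p → ℝ // u ⬝ᵥ u = 1}) : 0 ≤ directionalDepth Γ P u :=
  le_min ENNReal.toReal_nonneg ENNReal.toReal_nonneg

theorem scatterDepth_le_one (Γ : Matrix (Fin p) (Fin p) ℝ) (P : Measure (Fin p → ℝ))
    [IsProbabilityMeasure P] : scatterDepth Γ P ≤ 1 := by
  rw [scatterDepth_eq_iInf_directionalDepth]
  rcases isEmpty_or_nonempty {u : Fin p → ℝ // u ⬝ᵥ u = 1} with hu | hu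
  · rw [Real.iInf_of_isEmpty]
    exact zero_le_one
  · obtain ⟨u⟩ := hu
    exact (ciInf_le ⟨0, Set.forall_mem_range.2 (directionalDepth_nonneg Γ P)⟩ u).trans
      ((min_le_left _ _).trans measureReal_le_one)

theorem isProbabilityMeasure_contam [IsProbabilityMeasure P₀] [IsProbabilityMeasure Q]
    (hε0 : 0 ≤ ε) (hε1 : ε ≤ 1) : IsProbabilityMeasure (contam ε P₀ Q) := by
  constructor
  rw [contam, Measure.add_apply, Measure.smul_apply, Measure.smul_apply, measure_univ,
    measure_univ, smul_eq_mul, smul_eq_mul, mul_one, mul_one,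
    ← ENNReal.ofReal_add (sub_nonneg.2 hε1) hε0, sub_add_cancel, ENNReal.ofReal_one]

theorem contam_apply_toReal [IsFiniteMeasure P₀] [IsFiniteMeasure Q]
    (hε0 : 0 ≤ ε) (hε1 : ε ≤ 1) (A : Set (Fin p → ℝ)) :
    (contam ε P₀ Q A).toReal = (1 - ε) * (P₀ A).toReal + ε * (Q A).toReal := by
  rw [contam, Measure.add_apply, Measure.smul_apply, Measure.smul_apply, smul_eq_mul,
    smul_eq_mul, ENNReal.toReal_add (by finiteness) (by finiteness), ENNReal.toReal_mul,
    ENNReal.toReal_mul, ENNReal.toReal_ofReal (sub_nonneg.2 hε1), ENNReal.toReal_ofReal hε0]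

variable [IsProbabilityMeasure P₀] [IsProbabilityMeasure Q] (Γ : Matrix (Fin p) (Fin p) ℝ)

theorem mul_directionalDepth_le_contam (hε0 : 0 ≤ ε) (hε1 : ε ≤ 1)
    (u : {u : Fin p → ℝ // u ⬝ᵥ u = 1}) :
    (1 - ε) * directionalDepth Γ P₀ u ≤ directionalDepth Γ (contam ε P₀ Q) u := by
  rw [directionalDepth, directionalDepth, contam_apply_toReal P₀ Q hε0 hε1,
    contam_apply_toReal P₀ Q hε0 hε1, mul_min_of_nonneg _ _ (sub_nonneg.2 hε1)]
  exact min_le_min (le_add_of_nonneg_right (mul_nonneg hε0 ENNReal.toReal_nonneg))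
    (le_add_of_nonneg_right (mul_nonneg hε0 ENNReal.toReal_nonneg))

theorem directionalDepth_contam_le (hε0 : 0 ≤ ε) (hε1 : ε ≤ 1)
    (u : {u : Fin p → ℝ // u ⬝ᵥ u = 1}) :
    directionalDepth Γ (contam ε P₀ Q) u ≤ (1 - ε) * directionalDepth Γ P₀ u + ε := by
  rw [directionalDepth, directionalDepth, contam_apply_toReal P₀ Q hε0 hε1,
    contam_apply_toReal P₀ Q hε0 hε1, mul_min_of_nonneg _ _ (sub_nonneg.2 hε1),
    ← min_add_add_right]
  exact min_le_min
    (add_le_add le_rfl (mul_le_of_le_one_right hε0 measureReal_le_one))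
    (add_le_add le_rfl (mul_le_of_le_one_right hε0 measureReal_le_one))

theorem mul_scatterDepth_le_contam (hε0 : 0 ≤ ε) (hε1 : ε ≤ 1) :
    (1 - ε) * scatterDepth Γ P₀ ≤ scatterDepth Γ (contam ε P₀ Q) := by
  rw [scatterDepth_eq_iInf_directionalDepth, scatterDepth_eq_iInf_directionalDepth,
    Real.mul_iInf_of_nonneg (sub_nonneg.2 hε1)]
  refine ciInf_mono ⟨0, Set.forall_mem_range.2 fun u => ?_⟩
    (mul_directionalDepth_le_contam P₀ Q Γ hε0 hε1)
  exact mul_nonneg (sub_nonneg.2 hε1) (directionalDepth_nonneg Γ P₀ u)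

theorem scatterDepth_contam_le (hε0 : 0 ≤ ε) (hε1 : ε ≤ 1) :
    scatterDepth Γ (contam ε P₀ Q) ≤ (1 - ε) * scatterDepth Γ P₀ + ε := by
  rw [scatterDepth_eq_iInf_directionalDepth, scatterDepth_eq_iInf_directionalDepth]
  rcases isEmpty_or_nonempty {u : Fin p → ℝ // u ⬝ᵥ u = 1} with hu | hu
  · simpa only [Real.iInf_of_isEmpty, mul_zero, zero_add] using hε0
  · rw [Real.mul_iInf_of_nonneg (sub_nonneg.2 hε1), ciInf_add]
    · exact ciInf_mono ⟨0, Set.forall_mem_range.2 (directionalDepth_nonneg Γ _)⟩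
        (directionalDepth_contam_le P₀ Q Γ hε0 hε1)
    · refine ⟨0, Set.forall_mem_range.2 fun u => ?_⟩
      exact mul_nonneg (sub_nonneg.2 hε1) (directionalDepth_nonneg Γ P₀ u)

theorem mul_maxDepth_le_contam (hε0 : 0 ≤ ε) (hε1 : ε ≤ 1) :
    (1 - ε) * maxDepth P₀ ≤ maxDepth (contam ε P₀ Q) := by
  have := isProbabilityMeasure_contam P₀ Q hε0 hε1
  rw [maxDepth, maxDepth, Real.mul_iSup_of_nonneg (sub_nonneg.2 hε1)]
  exact ciSup_mono ⟨1, Set.forall_mem_range.2 fun Γ => scatterDepth_le_one Γ.1 _⟩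
    fun Γ => mul_scatterDepth_le_contam P₀ Q Γ.1 hε0 hε1

end Contamination

theorem outside_depth_region_not_deepest_general (p : ℕ)
    (P₀ : Measure (Fin p → ℝ)) [IsProbabilityMeasure P₀]
    (ε : ℝ) (hε0 : 0 ≤ ε) (hε : ε < 1 / 3)
    (Λ δ α : ℝ)
    (hΛ : Λ = ⨅ Q : {Q : Measure (Fin p → ℝ) // IsProbabilityMeasure Q},
      maxDepth (contam ε P₀ Q.1))
    (hδ : δ = (Λ - (1 - ε) * maxDepth P₀) / (1 - ε))
    (hα : α = ε / (1 - ε) - δ) :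
    0 ≤ δ ∧
      ∀ Γ : Matrix (Fin p) (Fin p) ℝ, Γ.PosDef →
        scatterDepth Γ P₀ < maxDepth P₀ - α →
        ∀ Q : Measure (Fin p → ℝ), IsProbabilityMeasure Q →
          scatterDepth Γ (contam ε P₀ Q) < Λ := by
  have hε1 : ε < 1 := by linarith
  have : Nonempty {Q : Measure (Fin p → ℝ) // IsProbabilityMeasure Q} :=
    ⟨⟨Measure.dirac 0, inferInstance⟩⟩
  have hΛ_ge : (1 - ε) * maxDepth P₀ ≤ Λ :=
    hΛ ▸ le_ciInf fun Q => have := Q.2; mul_maxDepth_le_contam P₀ Q.1 hε0 hε1.le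
  have hΛ_eq : Λ = (1 - ε) * (maxDepth P₀ - α) + ε := by
    rw [hα, hδ]
    field_simp [(sub_pos.2 hε1).ne']
    ring
  refine ⟨hδ ▸ div_nonneg (sub_nonneg.2 hΛ_ge) (sub_nonneg.2 hε1.le),
    fun Γ _ hΓ Q _ => ?_⟩
  calc scatterDepth Γ (contam ε P₀ Q) ≤ (1 - ε) * scatterDepth Γ P₀ + ε :=
        scatterDepth_contam_le P₀ Q Γ hε0 hε1.le
    _ < (1 - ε) * (maxDepth P₀ - α) + ε := by gcongr
    _ = Λ := hΛ_eq.symm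

/-- For `ε < 1/3`, with `Λ(ε,P₀) = inf_Q D_M(P_{ε,Q})` and
`δ(ε,P₀) = [Λ(ε,P₀) - (1-ε)D_M(P₀)]/(1-ε) ≥ 0`, any positive definite `Γ` outside the
depth region `L(α, P₀)` with `α = ε/(1-ε) - δ(ε,P₀)` satisfies
`D(Γ, P_{ε,Q}) < Λ(ε,P₀)` for every `Q`, hence cannot be a deepest scatter matrix. -/
theorem outside_depth_region_not_deepest (p : ℕ) (hp : 0 < p)
    (P₀ : Measure (Fin p → ℝ)) [IsProbabilityMeasure P₀]
    (ε : ℝ) (hε0 : 0 ≤ ε) (hε : ε < 1 / 3)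
    (Λ δ α : ℝ)
    (hΛ : Λ = ⨅ Q : {Q : Measure (Fin p → ℝ) // IsProbabilityMeasure Q},
      maxDepth (contam ε P₀ Q.1))
    (hδ : δ = (Λ - (1 - ε) * maxDepth P₀) / (1 - ε))
    (hα : α = ε / (1 - ε) - δ) :
    0 ≤ δ ∧
      ∀ Γ : Matrix (Fin p) (Fin p) ℝ, Γ.PosDef →
        scatterDepth Γ P₀ < maxDepth P₀ - α →
        ∀ Q : Measure (Fin p → ℝ), IsProbabilityMeasure Q →
          scatterDepth Γ (contam ε P₀ Q) < Λ :=
  outside_depth_region_not_deepest_general p P₀ ε hε0 hε Λ δ α hΛ hδ hα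
end
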